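/- arXiv:2603.09504 — 2 statements merged into one kernel-verified Lean document; each statement's English description precedes it below -/
import Mathlib

section
/- Under the assumptions that E_θ[T_+] < ∞, E_θ[(X_1^+)^{k+1}] < ∞, and μ_θ = E_θ[X_1] > 0, the first ladder height S_{T_+} satisfies E_θ[S_{T_+}^{k+1}] ≤ E_θ[T_+]·E_θ[(X_1^+)^{k+1}] and E_θ[S_{T_+}] = E_θ[T_+]·μ_θ; hence E_θ[S_{T_+}^{k+1}] / ((k+1) E_θ[S_{T_+}]) ≤ E_θ[(X_1^+)^{k+1}] / ((k+1) μ_θ). -/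
open MeasureTheory Real

/-!
The event `{i < T₊}` depends only on `X₁, …, Xᵢ`, hence is independent of `X_{i+1}`. Summing
`E[1_{i<T₊} g(X_{i+1})] = P(i < T₊) E[g(X₁)]` over `i` gives Wald's identity
`E[∑_{i<T₊} g(X_{i+1})] = E[T₊] E[g(X₁)]` for `g ≥ 0`, and for `g = id` after splitting into
positive and negative parts. At the ladder epoch `S_{T₊-1} ≤ 0 < S_{T₊}`, so
`S_{T₊}^{k+1} ≤ (X_{T₊}⁺)^{k+1} ≤ ∑_{i<T₊} (X_{i+1}⁺)^{k+1}`, and Wald's identity with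
`g(x) = (x⁺)^{k+1}` bounds the moment; the ratio bound follows on dividing.
-/

open ProbabilityTheory
open scoped ENNReal

section StoppedSums

variable {Ω : Type*} [MeasurableSpace Ω] {P : Measure Ω} {T : Ω → ℕ}

lemma measurable_of_measurableSet_lt (hT : ∀ i, MeasurableSet {ω | i < T ω}) : Measurable T :=
  measurable_of_Iic fun i => by
    convert (hT i).compl using 1
    ext ω
    simp

lemma lintegral_sum_range_eq_tsum_setLIntegral {Y : ℕ → Ω → ℝ≥0∞}
    (hT : ∀ i, MeasurableSet {ω | i < T ω}) (hY : ∀ i, Measurable (Y i)) :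
    ∫⁻ ω, ∑ i ∈ Finset.range (T ω), Y i ω ∂P = ∑' i, ∫⁻ ω in {ω | i < T ω}, Y i ω ∂P := by
  have hsum (ω : Ω) :
      ∑ i ∈ Finset.range (T ω), Y i ω = ∑' i, {ω | i < T ω}.indicator (Y i) ω := by
    rw [tsum_eq_sum (s := Finset.range (T ω))
      fun i hi => Set.indicator_of_notMem (by simpa using hi) _]
    exact Finset.sum_congr rfl fun i hi => (Set.indicator_of_mem (by simpa using hi) _).symm
  simp_rw [hsum, ← lintegral_indicator (hT _)]
  exact lintegral_tsum fun i => ((hY i).indicator (hT i)).aemeasurable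

lemma lintegral_natCast_eq_tsum_measure_lt (hT : ∀ i, MeasurableSet {ω | i < T ω}) :
    ∫⁻ ω, (T ω : ℝ≥0∞) ∂P = ∑' i, P {ω | i < T ω} := by
  simpa using lintegral_sum_range_eq_tsum_setLIntegral (P := P) (Y := fun _ _ => 1) hT
    fun _ => measurable_const

variable {X : ℕ → Ω → ℝ} (hX : ∀ i, StronglyMeasurable (X i))
include hX

lemma setLIntegral_comp_succ_eq_measure_mul (hindep : iIndepFun X P) {i : ℕ}
    (hident : IdentDistrib (X (i + 1)) (X 1) P P)
    (hT : MeasurableSet[Filtration.natural X hX i] {ω | i < T ω})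
    {g : ℝ → ℝ≥0∞} (hg : Measurable g) :
    ∫⁻ ω in {ω | i < T ω}, g (X (i + 1) ω) ∂P = P {ω | i < T ω} * ∫⁻ ω, g (X 1 ω) ∂P := by
  set A := {ω | i < T ω}
  have hA : MeasurableSet A := Filtration.le _ i _ hT
  have hindicator_meas : Measurable[Filtration.natural X hX i] (A.indicator (1 : Ω → ℝ≥0∞)) :=
    measurable_const.indicator hT
  calc ∫⁻ ω in A, g (X (i + 1) ω) ∂P = ∫⁻ ω, A.indicator 1 ω * g (X (i + 1) ω) ∂P := by
        rw [← lintegral_indicator hA]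
        congr 1 with ω
        by_cases h : ω ∈ A <;> simp [h]
    _ = (∫⁻ ω, A.indicator 1 ω ∂P) * ∫⁻ ω, g (X (i + 1) ω) ∂P :=
        lintegral_mul_eq_lintegral_mul_lintegral_of_independent_measurableSpace
          (Filtration.le _ i) (hX (i + 1)).measurable.comap_le
          (hindep.indep_comap_natural_of_lt hX (Nat.lt_succ_self i)).symm
          hindicator_meas (hg.comp (comap_measurable (X (i + 1))))
    _ = P A * ∫⁻ ω, g (X 1 ω) ∂P := by
        rw [lintegral_indicator_one hA]
        exact congrArg _ (hident.comp hg).lintegral_eq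

theorem lintegral_sum_range_comp_eq_mul (hindep : iIndepFun X P)
    (hident : ∀ n, IdentDistrib (X n) (X 1) P P)
    (hT : ∀ i, MeasurableSet[Filtration.natural X hX i] {ω | i < T ω})
    {g : ℝ → ℝ≥0∞} (hg : Measurable g) :
    ∫⁻ ω, ∑ i ∈ Finset.range (T ω), g (X (i + 1) ω) ∂P =
      (∫⁻ ω, (T ω : ℝ≥0∞) ∂P) * ∫⁻ ω, g (X 1 ω) ∂P := by
  have hT' (i : ℕ) : MeasurableSet {ω | i < T ω} := Filtration.le _ i _ (hT i)
  rw [lintegral_sum_range_eq_tsum_setLIntegral (Y := fun i ω => g (X (i + 1) ω)) hT'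
      fun i => hg.comp (hX (i + 1)).measurable,
    lintegral_natCast_eq_tsum_measure_lt hT', ← ENNReal.tsum_mul_right]
  exact tsum_congr fun i => setLIntegral_comp_succ_eq_measure_mul hX hindep (hident _) (hT i) hg

theorem integrable_sum_range_comp_and_integral_eq (hindep : iIndepFun X P)
    (hident : ∀ n, IdentDistrib (X n) (X 1) P P)
    (hT : ∀ i, MeasurableSet[Filtration.natural X hX i] {ω | i < T ω})
    (hTint : Integrable (fun ω => (T ω : ℝ)) P)
    {g : ℝ → ℝ} (hg : Measurable g) (hg_nonneg : ∀ x, 0 ≤ g x)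
    (hgX : Integrable (fun ω => g (X 1 ω)) P) :
    Integrable (fun ω => ∑ i ∈ Finset.range (T ω), g (X (i + 1) ω)) P ∧
      ∫ ω, ∑ i ∈ Finset.range (T ω), g (X (i + 1) ω) ∂P =
        (∫ ω, (T ω : ℝ) ∂P) * ∫ ω, g (X 1 ω) ∂P := by
  have hT' (i : ℕ) : MeasurableSet {ω | i < T ω} := Filtration.le _ i _ (hT i)
  have hsum_meas : Measurable fun ω => ∑ i ∈ Finset.range (T ω), g (X (i + 1) ω) :=
    (measurable_from_prod_countable_left (f := fun p : Ω × ℕ =>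
        ∑ i ∈ Finset.range p.2, g (X (i + 1) p.1))
      fun n => Finset.measurable_fun_sum (Finset.range n) fun i _ =>
        hg.comp (hX (i + 1)).measurable).comp
      (measurable_id.prodMk (measurable_of_measurableSet_lt hT'))
  have hsum_nonneg : 0 ≤ᵐ[P] fun ω => ∑ i ∈ Finset.range (T ω), g (X (i + 1) ω) :=
    ae_of_all _ fun ω => Finset.sum_nonneg fun i _ => hg_nonneg _
  have hlintegral : ∫⁻ ω, ENNReal.ofReal (∑ i ∈ Finset.range (T ω), g (X (i + 1) ω)) ∂P =
      ENNReal.ofReal ((∫ ω, (T ω : ℝ) ∂P) * ∫ ω, g (X 1 ω) ∂P) := by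
    simp_rw [ENNReal.ofReal_sum_of_nonneg fun i _ => hg_nonneg _]
    rw [lintegral_sum_range_comp_eq_mul hX hindep hident hT hg.ennreal_ofReal,
      ENNReal.ofReal_mul (integral_nonneg fun ω => Nat.cast_nonneg _),
      ofReal_integral_eq_lintegral_ofReal hTint (ae_of_all _ fun ω => Nat.cast_nonneg _),
      ofReal_integral_eq_lintegral_ofReal hgX (ae_of_all _ fun ω => hg_nonneg _)]
    simp_rw [ENNReal.ofReal_natCast]
  have hint : Integrable (fun ω => ∑ i ∈ Finset.range (T ω), g (X (i + 1) ω)) P :=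
    (lintegral_ofReal_ne_top_iff_integrable hsum_meas.aestronglyMeasurable hsum_nonneg).1
      (hlintegral ▸ ENNReal.ofReal_ne_top)
  refine ⟨hint, ?_⟩
  rw [integral_eq_lintegral_of_nonneg_ae hsum_nonneg hsum_meas.aestronglyMeasurable, hlintegral,
    ENNReal.toReal_ofReal (mul_nonneg (integral_nonneg fun ω => Nat.cast_nonneg _)
      (integral_nonneg fun ω => hg_nonneg _))]

theorem integral_sum_range_eq_mul (hindep : iIndepFun X P)
    (hident : ∀ n, IdentDistrib (X n) (X 1) P P)
    (hT : ∀ i, MeasurableSet[Filtration.natural X hX i] {ω | i < T ω})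
    (hTint : Integrable (fun ω => (T ω : ℝ)) P) (hX1 : Integrable (X 1) P) :
    ∫ ω, ∑ i ∈ Finset.range (T ω), X (i + 1) ω ∂P = (∫ ω, (T ω : ℝ) ∂P) * ∫ ω, X 1 ω ∂P := by
  obtain ⟨hpos_int, hpos⟩ := integrable_sum_range_comp_and_integral_eq hX hindep hident hT hTint
    (g := fun x => max x 0) (measurable_id.max measurable_const) (fun x => le_max_right x 0)
    hX1.pos_part
  obtain ⟨hneg_int, hneg⟩ := integrable_sum_range_comp_and_integral_eq hX hindep hident hT hTint
    (measurable_neg.max measurable_const) (fun x => le_max_right (-x) 0) hX1.neg_part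
  calc ∫ ω, ∑ i ∈ Finset.range (T ω), X (i + 1) ω ∂P
      = ∫ ω, (∑ i ∈ Finset.range (T ω), max (X (i + 1) ω) 0 -
          ∑ i ∈ Finset.range (T ω), max (-X (i + 1) ω) 0) ∂P := by
        simp only [← Finset.sum_sub_distrib, max_zero_sub_max_neg_zero_eq_self]
    _ = (∫ ω, (T ω : ℝ) ∂P) * ∫ ω, max (X 1 ω) 0 ∂P -
          (∫ ω, (T ω : ℝ) ∂P) * ∫ ω, max (-X 1 ω) 0 ∂P := by
        rw [integral_sub hpos_int hneg_int, hpos, hneg]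
    _ = (∫ ω, (T ω : ℝ) ∂P) * ∫ ω, X 1 ω ∂P := by
        rw [← mul_sub, ← integral_sub hX1.pos_part hX1.neg_part]
        simp only [max_zero_sub_max_neg_zero_eq_self]

end StoppedSums

noncomputable def ladderEpoch (s : ℕ → ℝ) : ℕ := sInf {n | 1 ≤ n ∧ 0 < s n}

section LadderEpoch

variable {s : ℕ → ℝ} (hs : {n | 1 ≤ n ∧ 0 < s n}.Nonempty)
include hs

lemma one_le_ladderEpoch : 1 ≤ ladderEpoch s := (Nat.sInf_mem hs).1

lemma ladderHeight_pos : 0 < s (ladderEpoch s) := (Nat.sInf_mem hs).2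

lemma lt_ladderEpoch_iff {i : ℕ} : i < ladderEpoch s ↔ ∀ n, 1 ≤ n → n ≤ i → s n ≤ 0 := by
  constructor
  · intro hi n hn hni
    by_contra! hpos
    have : ladderEpoch s ≤ n := Nat.sInf_le ⟨hn, hpos⟩
    omega
  · intro h
    by_contra! hle
    exact (ladderHeight_pos hs).not_ge (h _ (one_le_ladderEpoch hs) hle)

lemma ladderHeight_le_max_zero {x : ℕ → ℝ} (hx : ∀ n, s n = ∑ i ∈ Finset.range n, x (i + 1)) :
    s (ladderEpoch s) ≤ max (x (ladderEpoch s)) 0 := by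
  obtain ⟨m, hm⟩ := Nat.exists_eq_add_of_le' (one_le_ladderEpoch hs)
  have hsm : s m ≤ 0 := by
    rcases Nat.eq_zero_or_pos m with rfl | hm_pos
    · simp [hx]
    · exact (lt_ladderEpoch_iff hs).1 (by omega) m hm_pos le_rfl
  rw [hm, hx, Finset.sum_range_succ, ← hx]
  linarith [le_max_left (x (m + 1)) 0]

lemma ladderHeight_pow_le_sum {x : ℕ → ℝ} (hx : ∀ n, s n = ∑ i ∈ Finset.range n, x (i + 1))
    (k : ℕ) :
    s (ladderEpoch s) ^ k ≤ ∑ i ∈ Finset.range (ladderEpoch s), max (x (i + 1)) 0 ^ k := by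
  obtain ⟨m, hm⟩ := Nat.exists_eq_add_of_le' (one_le_ladderEpoch hs)
  calc s (ladderEpoch s) ^ k ≤ max (x (ladderEpoch s)) 0 ^ k :=
        pow_le_pow_left₀ (ladderHeight_pos hs).le (ladderHeight_le_max_zero hs hx) k
    _ ≤ ∑ i ∈ Finset.range (ladderEpoch s), max (x (i + 1)) 0 ^ k := by
        rw [hm]
        exact Finset.single_le_sum (f := fun i => max (x (i + 1)) 0 ^ k)
          (fun i _ => pow_nonneg (le_max_right _ _) k) (Finset.self_mem_range_succ m)

end LadderEpoch

lemma measurableSet_lt_ladderEpoch {Ω : Type*} {m : MeasurableSpace Ω} {F : Filtration ℕ m}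
    {S : ℕ → Ω → ℝ} (hS : Adapted F S) (hne : ∀ ω, {n | 1 ≤ n ∧ 0 < S n ω}.Nonempty) (i : ℕ) :
    MeasurableSet[F i] {ω | i < ladderEpoch (S · ω)} := by
  have hset : {ω | i < ladderEpoch (S · ω)} = ⋂ n ∈ Finset.Icc 1 i, {ω | S n ω ≤ 0} := by
    ext ω
    simp [lt_ladderEpoch_iff (hne ω)]
  rw [hset]
  exact Finset.measurableSet_biInter _ fun n hn =>
    measurableSet_le (hS.measurable_le (Finset.mem_Icc.1 hn).2) measurable_const

/-- Lemma 2.2: for an i.i.d. random walk with `E[T₊] < ∞`, `E[(X₁⁺)^{k+1}] < ∞` and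
`μ = E[X₁] > 0`, the first strict ascending ladder height `S_{T₊}` satisfies
`E[S_{T₊}^{k+1}] ≤ E[T₊]·E[(X₁⁺)^{k+1}]` and (Wald) `E[S_{T₊}] = E[T₊]·μ`; hence
`E[S_{T₊}^{k+1}]/((k+1)E[S_{T₊}]) ≤ E[(X₁⁺)^{k+1}]/((k+1)μ)`. -/
theorem stmt7 {Ω : Type*} [MeasurableSpace Ω] (P : Measure Ω) [IsProbabilityMeasure P]
    (X : ℕ → Ω → ℝ) (hmeas : ∀ n, Measurable (X n))
    (hindep : ProbabilityTheory.iIndepFun X P)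
    (hident : ∀ n, ProbabilityTheory.IdentDistrib (X n) (X 1) P P)
    (S : ℕ → Ω → ℝ) (hS : ∀ n ω, S n ω = ∑ i ∈ Finset.range n, X (i + 1) ω)
    (T : Ω → ℕ) (hT : ∀ ω, T ω = sInf {n : ℕ | 1 ≤ n ∧ 0 < S n ω})
    (hne : ∀ ω, {n : ℕ | 1 ≤ n ∧ 0 < S n ω}.Nonempty)
    (k : ℕ)
    (hX1 : Integrable (X 1) P)
    (hTint : Integrable (fun ω => (T ω : ℝ)) P)
    (hXk : Integrable (fun ω => max (X 1 ω) 0 ^ (k + 1)) P)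
    (hμ : 0 < ∫ ω, X 1 ω ∂P) :
    (∫ ω, S (T ω) ω ^ (k + 1) ∂P) ≤
        (∫ ω, (T ω : ℝ) ∂P) * ∫ ω, max (X 1 ω) 0 ^ (k + 1) ∂P ∧
    (∫ ω, S (T ω) ω ∂P) = (∫ ω, (T ω : ℝ) ∂P) * ∫ ω, X 1 ω ∂P ∧
    (∫ ω, S (T ω) ω ^ (k + 1) ∂P) / ((k + 1) * ∫ ω, S (T ω) ω ∂P) ≤
        (∫ ω, max (X 1 ω) 0 ^ (k + 1) ∂P) / ((k + 1) * ∫ ω, X 1 ω ∂P) := by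
  have hX : ∀ n, StronglyMeasurable (X n) := fun n => (hmeas n).stronglyMeasurable
  have hT_eq : ∀ ω, T ω = ladderEpoch (S · ω) := hT
  have hS_adapted : Adapted (Filtration.natural X hX) S := fun n => by
    rw [show S n = fun ω => ∑ i ∈ Finset.range n, X (i + 1) ω from funext (hS n)]
    exact Finset.measurable_fun_sum _ fun i hi =>
      (Filtration.stronglyAdapted_natural hX).adapted.measurable_le (Finset.mem_range.1 hi)
  have hstop (i : ℕ) : MeasurableSet[Filtration.natural X hX i] {ω | i < T ω} := by
    simpa only [hT_eq] using measurableSet_lt_ladderEpoch hS_adapted hne i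
  obtain ⟨hsum_int, hsum⟩ := integrable_sum_range_comp_and_integral_eq hX hindep hident hstop
    hTint (g := fun x => max x 0 ^ (k + 1)) ((measurable_id.max measurable_const).pow_const _)
    (fun x => pow_nonneg (le_max_right x 0) _) hXk
  have hmoment : (∫ ω, S (T ω) ω ^ (k + 1) ∂P) ≤
      (∫ ω, (T ω : ℝ) ∂P) * ∫ ω, max (X 1 ω) 0 ^ (k + 1) ∂P := by
    rw [← hsum]
    refine integral_mono_of_nonneg (ae_of_all _ fun ω => ?_) hsum_int (ae_of_all _ fun ω => ?_)
    · dsimp only [Pi.zero_apply]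
      rw [hT_eq]
      exact pow_nonneg (ladderHeight_pos (hne ω)).le _
    · dsimp only
      rw [hT_eq]
      exact ladderHeight_pow_le_sum (hne ω) (x := (X · ω)) (hS · ω) (k + 1)
  have hwald : (∫ ω, S (T ω) ω ∂P) = (∫ ω, (T ω : ℝ) ∂P) * ∫ ω, X 1 ω ∂P := by
    simp_rw [hS]
    exact integral_sum_range_eq_mul hX hindep hident hstop hTint hX1
  refine ⟨hmoment, hwald, ?_⟩
  have hT_pos : 0 < ∫ ω, (T ω : ℝ) ∂P := by
    refine lt_of_lt_of_le (by simp) (integral_mono (integrable_const (1 : ℝ)) hTint fun ω => ?_)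
    dsimp only
    rw [hT_eq]
    exact Nat.one_le_cast.2 (one_le_ladderEpoch (hne ω))
  rw [hwald, div_le_div_iff₀ (by positivity) (by positivity)]
  have hscaled := mul_le_mul_of_nonneg_right hmoment
    (by positivity : (0 : ℝ) ≤ (k + 1) * ∫ ω, X 1 ω ∂P)
  linarith
end

section
/- Let X, Y be integrable real random variables and U ~ Unif(0,1) independent of both. Then the total variation distance between the laws of X + U and Y + U satisfies ‖Law(X+U) − Law(Y+U)‖_TV ≤ W_1(X, Y). -/
open MeasureTheory Real

/-!
Convolving with `Unif(0,1)` gives `P(X + U ∈ A) = E f_A(X)` with `f_A(x) = |A ∩ (x, x + 1)|`.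
The windows `(x, x + 1)` and `(y, y + 1)` differ by a set of measure `|x - y|`, so `f_A` is
1-Lipschitz; hence for every coupling `γ` of the laws of `X` and `Y`,
`|P(X + U ∈ A) - P(Y + U ∈ A)| ≤ E_γ |f_A(x) - f_A(y)| ≤ E_γ |x - y|`.
-/

noncomputable def W1 (μ ν : Measure ℝ) : ℝ :=
  sInf {c : ℝ | ∃ γ : Measure (ℝ × ℝ), IsProbabilityMeasure γ ∧
    γ.map Prod.fst = μ ∧ γ.map Prod.snd = ν ∧ c = ∫ p, |p.1 - p.2| ∂γ}

noncomputable def tvDist (μ ν : Measure ℝ) : ℝ :=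
  sSup {c : ℝ | ∃ A : Set ℝ, MeasurableSet A ∧ c = |(μ A).toReal - (ν A).toReal|}

open Set ProbabilityTheory

theorem MeasureTheory.Measure.conv_apply {M : Type*} [AddMonoid M] [MeasurableSpace M]
    [MeasurableAdd₂ M] (μ ν : Measure M) [SFinite ν] {s : Set M} (hs : MeasurableSet s) :
    (μ ∗ ν) s = ∫⁻ x, ν ((x + ·) ⁻¹' s) ∂μ := by
  rw [Measure.conv, Measure.map_apply measurable_add hs, Measure.prod_apply (measurable_add hs)]
  rfl

theorem volume_restrict_Ioo_preimage_const_add (A : Set ℝ) (x a b : ℝ) :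
    volume.restrict (Ioo a b) ((x + ·) ⁻¹' A) = volume (A ∩ Ioo (x + a) (x + b)) := by
  rw [Measure.restrict_apply' measurableSet_Ioo, ← measure_preimage_add volume x (A ∩ _),
    preimage_inter, preimage_const_add_Ioo, add_sub_cancel_left, add_sub_cancel_left]

noncomputable def windowVolume (A : Set ℝ) (x : ℝ) : ℝ := volume.real (A ∩ Ioo x (x + 1))

theorem volume_inter_Ioo_ne_top (A : Set ℝ) (x y : ℝ) : volume (A ∩ Ioo x y) ≠ ⊤ :=
  measure_inter_ne_top_of_right_ne_top measure_Ioo_lt_top.ne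

theorem windowVolume_nonneg (A : Set ℝ) (x : ℝ) : 0 ≤ windowVolume A x := measureReal_nonneg

theorem windowVolume_le_one (A : Set ℝ) (x : ℝ) : windowVolume A x ≤ 1 := by
  calc windowVolume A x ≤ volume.real (Ioo x (x + 1)) :=
        measureReal_mono inter_subset_right measure_Ioo_lt_top.ne
    _ = 1 := by simp [Real.volume_real_Ioo]

theorem Ioo_add_diff_Ioo_add_subset (x y c : ℝ) :
    Ioo x (x + c) \ Ioo y (y + c) ⊆ Ioc x y ∪ Ico (y + c) (x + c) := by
  rintro t ⟨⟨hxt, htx⟩, hty⟩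
  rcases le_or_gt t y with h | h
  · exact Or.inl ⟨hxt, h⟩
  · exact Or.inr ⟨not_lt.1 fun h' => hty ⟨h, h'⟩, htx⟩

theorem lipschitzWith_windowVolume (A : Set ℝ) : LipschitzWith 1 (windowVolume A) := by
  refine LipschitzWith.of_le_add fun x y => ?_
  set cover := A ∩ Ioo y (y + 1) ∪ (Ioc x y ∪ Ico (y + 1) (x + 1))
  have hcover : A ∩ Ioo x (x + 1) ⊆ cover := by
    rintro t ⟨hA, ht⟩
    by_cases hty : t ∈ Ioo y (y + 1)
    · exact Or.inl ⟨hA, hty⟩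
    · exact Or.inr (Ioo_add_diff_Ioo_add_subset x y 1 ⟨ht, hty⟩)
  have hfin : volume cover ≠ ⊤ := measure_union_ne_top (volume_inter_Ioo_ne_top A y (y + 1))
    (measure_union_ne_top measure_Ioc_lt_top.ne measure_Ico_lt_top.ne)
  calc windowVolume A x ≤ volume.real cover := measureReal_mono hcover hfin
    _ ≤ windowVolume A y + (volume.real (Ioc x y) + volume.real (Ico (y + 1) (x + 1))) :=
        (measureReal_union_le _ _).trans (add_le_add_right (measureReal_union_le _ _) _)
    _ = windowVolume A y + dist x y := by
        rw [Real.volume_real_Ioc, Real.volume_real_Ico, Real.dist_eq, ← abs_neg,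
          ← max_zero_add_max_neg_zero_eq_abs_self]
        ring_nf

theorem integrable_windowVolume (A : Set ℝ) (μ : Measure ℝ) [IsFiniteMeasure μ] :
    Integrable (windowVolume A) μ :=
  Integrable.of_bound (lipschitzWith_windowVolume A).continuous.aestronglyMeasurable 1
    (Filter.Eventually.of_forall fun x => by
      rw [Real.norm_of_nonneg (windowVolume_nonneg A x)]; exact windowVolume_le_one A x)

theorem conv_uniform_apply_toReal (ρ : Measure ℝ) {A : Set ℝ} (hA : MeasurableSet A) :
    ((ρ ∗ volume.restrict (Ioo 0 1)) A).toReal = ∫ x, windowVolume A x ∂ρ := by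
  rw [integral_eq_lintegral_of_nonneg_ae (Filter.Eventually.of_forall (windowVolume_nonneg A))
    (lipschitzWith_windowVolume A).continuous.aestronglyMeasurable, Measure.conv_apply _ _ hA]
  congr 1
  refine lintegral_congr fun x => ?_
  rw [volume_restrict_Ioo_preimage_const_add, windowVolume, measureReal_def,
    ENNReal.ofReal_toReal (volume_inter_Ioo_ne_top _ _ _), add_zero]

theorem map_add_apply_toReal_eq_integral_windowVolume {Ω : Type*} [MeasurableSpace Ω]
    {P : Measure Ω} [IsFiniteMeasure P] {Z U : Ω → ℝ} (hZ : Measurable Z) (hU : Measurable U)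
    (hUnif : P.map U = volume.restrict (Ioo 0 1)) (hind : IndepFun U Z P)
    {A : Set ℝ} (hA : MeasurableSet A) :
    ((P.map fun ω => Z ω + U ω) A).toReal = ∫ x, windowVolume A x ∂(P.map Z) := by
  have hconv : P.map (fun ω => Z ω + U ω) = P.map Z ∗ volume.restrict (Ioo 0 1) :=
    hUnif ▸ hind.symm.map_add_eq_map_conv_map hZ hU
  rw [hconv, conv_uniform_apply_toReal _ hA]

theorem abs_integral_sub_integral_le_of_coupling {α : Type*} [PseudoMetricSpace α]
    [MeasurableSpace α] [OpensMeasurableSpace α] {γ : Measure (α × α)} {f : α → ℝ} {K : NNReal}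
    (hf : LipschitzWith K f) (hf₁ : Integrable f (γ.map Prod.fst))
    (hf₂ : Integrable f (γ.map Prod.snd)) (hdist : Integrable (fun p => dist p.1 p.2) γ) :
    |∫ x, f x ∂(γ.map Prod.fst) - ∫ x, f x ∂(γ.map Prod.snd)| ≤ K * ∫ p, dist p.1 p.2 ∂γ := by
  have hmeas {μ : Measure α} : AEStronglyMeasurable f μ := hf.continuous.aestronglyMeasurable
  have h₁ : Integrable (fun p : α × α => f p.1) γ :=
    (integrable_map_measure hmeas measurable_fst.aemeasurable).1 hf₁
  have h₂ : Integrable (fun p : α × α => f p.2) γ :=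
    (integrable_map_measure hmeas measurable_snd.aemeasurable).1 hf₂
  rw [integral_map measurable_fst.aemeasurable hmeas,
    integral_map measurable_snd.aemeasurable hmeas, ← integral_sub h₁ h₂, ← integral_const_mul]
  calc |∫ p, f p.1 - f p.2 ∂γ| ≤ ∫ p, |f p.1 - f p.2| ∂γ := abs_integral_le_integral_abs
    _ ≤ ∫ p, K * dist p.1 p.2 ∂γ := integral_mono (h₁.sub h₂).abs (hdist.const_mul _)
        fun p => by simpa only [Real.dist_eq] using hf.dist_le_mul p.1 p.2

theorem integrable_dist_of_integrable_map {γ : Measure (ℝ × ℝ)}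
    (h₁ : Integrable id (γ.map Prod.fst)) (h₂ : Integrable id (γ.map Prod.snd)) :
    Integrable (fun p : ℝ × ℝ => dist p.1 p.2) γ := by
  simp_rw [Real.dist_eq]
  exact ((integrable_map_measure aestronglyMeasurable_id measurable_fst.aemeasurable).1 h₁).sub
    ((integrable_map_measure aestronglyMeasurable_id measurable_snd.aemeasurable).1 h₂) |>.abs

/-- Lemma 3.2: smoothing converts `W₁` into total variation. If `U ~ Unif(0,1)` is
independent of the integrable random variables `X` and `Y`, then
`‖Law(X+U) − Law(Y+U)‖_TV ≤ W₁(X, Y)`. -/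
theorem stmt15 {Ω : Type*} [MeasurableSpace Ω] (P : Measure Ω) [IsProbabilityMeasure P]
    (X Y U : Ω → ℝ) (hX : Measurable X) (hY : Measurable Y) (hU : Measurable U)
    (hXInt : Integrable X P) (hYInt : Integrable Y P)
    (hUnif : P.map U = volume.restrict (Set.Ioo (0 : ℝ) 1))
    (hUX : ProbabilityTheory.IndepFun U X P)
    (hUY : ProbabilityTheory.IndepFun U Y P) :
    tvDist (P.map (fun ω => X ω + U ω)) (P.map (fun ω => Y ω + U ω)) ≤
      W1 (P.map X) (P.map Y) := by
  have hXY : Measurable fun ω => (X ω, Y ω) := hX.prodMk hY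
  refine le_csInf ⟨_, P.map (fun ω => (X ω, Y ω)),
    Measure.isProbabilityMeasure_map hXY.aemeasurable, Measure.map_map measurable_fst hXY, Measure.map_map measurable_snd hXY, rfl⟩ ?_
  rintro _ ⟨γ, hγ, hγX, hγY, rfl⟩
  refine Real.sSup_le ?_ (integral_nonneg fun _ => abs_nonneg _)
  rintro _ ⟨A, hA, rfl⟩
  have hlaw {Z : Ω → ℝ} (hZ : Measurable Z) (hZInt : Integrable Z P) : Integrable id (P.map Z) :=
    (integrable_map_measure aestronglyMeasurable_id hZ.aemeasurable).2 hZInt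
  have hdist := integrable_dist_of_integrable_map (hγX ▸ hlaw hX hXInt) (hγY ▸ hlaw hY hYInt)
  rw [map_add_apply_toReal_eq_integral_windowVolume hX hU hUnif hUX hA,
    map_add_apply_toReal_eq_integral_windowVolume hY hU hUnif hUY hA, ← hγX, ← hγY]
  simpa only [NNReal.coe_one, one_mul, Real.dist_eq] using
    abs_integral_sub_integral_le_of_coupling (lipschitzWith_windowVolume A)
      (integrable_windowVolume A _) (integrable_windowVolume A _) hdist
end
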